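/- arXiv:2007.14358 — 2 statements merged into one kernel-verified Lean document; each statement's English description precedes it below -/
import Mathlib

section
/- For any a ∈ ℝⁿ≥0 with a ≠ 0, the point x = a/‖a‖₁ lies in the simplex Δⁿ and satisfies ⟨a, ⟨ℓ, x⟩1 − ℓ⟩ = 0 for every ℓ ∈ ℝⁿ. In particular, the halfspace H_a = {z ∈ ℝⁿ : ⟨a, z⟩ ≤ 0} is forceable in the regret-matching Blackwell game: there exists x ∈ Δⁿ such that u(x, ℓ) = ⟨ℓ,x⟩1 − ℓ ∈ H_a for all ℓ ∈ ℝⁿ. -/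
open scoped InnerProductSpace BigOperators

/-- The all-ones vector in ℝⁿ. -/
noncomputable def ones (n : ℕ) : EuclideanSpace ℝ (Fin n) := WithLp.toLp 2 (fun _ => (1 : ℝ))

/-- ℓ₁ norm on ℝⁿ. -/
noncomputable def l1 {n : ℕ} (w : EuclideanSpace ℝ (Fin n)) : ℝ := ∑ i, |w i|

/-!
Write `s = ∑ aᵢ`. Since `⟪a, 1⟫ = s`, we get `⟪a, ⟪ℓ, x⟫ • 1 - ℓ⟫ = s ⟪ℓ, x⟫ - ⟪a, ℓ⟫`, which
vanishes for every `ℓ` as soon as `a = s • x`. For nonnegative `a ≠ 0`, the point `x = a / ‖a‖₁`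
lies in the simplex and satisfies `a = s • x` because `‖a‖₁ = s`.
-/

section

variable {n : ℕ}

theorem inner_ones_right (a : EuclideanSpace ℝ (Fin n)) : ⟪a, ones n⟫_ℝ = ∑ i, a i := by
  simp [ones, PiLp.inner_apply]

theorem l1_pos {a : EuclideanSpace ℝ (Fin n)} (ha : a ≠ 0) : 0 < l1 a := by
  obtain ⟨i, hi⟩ : ∃ i, a i ≠ 0 := by
    by_contra! h
    exact ha (PiLp.ext h)
  exact Finset.sum_pos' (fun j _ => abs_nonneg (a j)) ⟨i, Finset.mem_univ i, abs_pos.mpr hi⟩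

theorem l1_eq_sum_of_nonneg {a : EuclideanSpace ℝ (Fin n)} (ha : ∀ i, 0 ≤ a i) :
    l1 a = ∑ i, a i :=
  Finset.sum_congr rfl fun i _ => abs_of_nonneg (ha i)

theorem inv_l1_smul_mem_stdSimplex {a : EuclideanSpace ℝ (Fin n)} (ha : ∀ i, 0 ≤ a i)
    (hne : a ≠ 0) : ⇑((l1 a)⁻¹ • a) ∈ stdSimplex ℝ (Fin n) := by
  have hpos := l1_pos hne
  refine ⟨fun i => mul_nonneg (inv_nonneg.mpr hpos.le) (ha i), ?_⟩
  simp only [PiLp.smul_apply, smul_eq_mul, ← Finset.mul_sum, ← l1_eq_sum_of_nonneg ha]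
  exact inv_mul_cancel₀ hpos.ne'

theorem inner_smul_ones_sub_eq_zero {a x : EuclideanSpace ℝ (Fin n)}
    (hax : a = (∑ i, a i) • x) (ℓ : EuclideanSpace ℝ (Fin n)) :
    ⟪a, ⟪ℓ, x⟫_ℝ • ones n - ℓ⟫_ℝ = 0 := by
  rw [inner_sub_right, real_inner_smul_right, inner_ones_right]
  nth_rw 2 [hax]
  rw [real_inner_smul_left, real_inner_comm, mul_comm, sub_self]

end

/-- For nonzero `a ∈ ℝⁿ≥0`, `x = a/‖a‖₁` lies in the simplex and satisfies
`⟨a, ⟨ℓ,x⟩1 − ℓ⟩ = 0` for every `ℓ`; hence the halfspace `H_a = {z : ⟨a,z⟩ ≤ 0}` is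
forceable: some `x` in the simplex guarantees `u(x,ℓ) = ⟨ℓ,x⟩1 − ℓ ∈ H_a` for all `ℓ`. -/
theorem stmt_12 {n : ℕ} (a : EuclideanSpace ℝ (Fin n))
    (ha : ∀ i, 0 ≤ a i) (hne : a ≠ 0) :
    ((∀ i, 0 ≤ ((l1 a)⁻¹ • a) i) ∧ ∑ i, ((l1 a)⁻¹ • a) i = 1) ∧
    (∀ ℓ : EuclideanSpace ℝ (Fin n),
      ⟪a, ⟪ℓ, (l1 a)⁻¹ • a⟫_ℝ • ones n - ℓ⟫_ℝ = 0) ∧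
    (∃ x : EuclideanSpace ℝ (Fin n), ((∀ i, 0 ≤ x i) ∧ ∑ i, x i = 1) ∧
      ∀ ℓ : EuclideanSpace ℝ (Fin n), ⟪a, ⟪ℓ, x⟫_ℝ • ones n - ℓ⟫_ℝ ≤ 0) := by
  have hsimplex := inv_l1_smul_mem_stdSimplex ha hne
  have hax : a = (∑ i, a i) • (l1 a)⁻¹ • a := by
    rw [← l1_eq_sum_of_nonneg ha, smul_inv_smul₀ (l1_pos hne).ne']
  have hzero := inner_smul_ones_sub_eq_zero hax
  exact ⟨hsimplex, hzero, _, hsimplex, fun ℓ => (hzero ℓ).le⟩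
end

section
/- Predictive FTRL regret bound: let φ : D → ℝ≥0 be differentiable and 1-strongly convex w.r.t. ‖·‖ on the closed convex set D ⊆ ℝⁿ, η > 0. Define L⁰ = 0, Lᵗ = Lᵗ⁻¹ + ℓᵗ, and xᵗ = argmin_{x∈D} ⟨Lᵗ⁻¹ + mᵗ, x⟩ + (1/η)φ(x). Then for every x̂ ∈ D and every T, Σₜ₌₁ᵀ ⟨ℓᵗ, xᵗ − x̂⟩ ≤ φ(x̂)/η + η Σₜ₌₁ᵀ ‖ℓᵗ − mᵗ‖*² − (1/(4η)) Σₜ₌₁^{T−1} ‖xᵗ⁺¹ − xᵗ‖². -/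
/-!
Let `Fₜ(y) = ⟪Lₜ₋₁ + mₜ, y⟫ + φ(y)/η`. Strong convexity gives the minimiser `xₜ` quadratic growth,
`Fₜ(xₜ) + N(y - xₜ)²/(2η) ≤ Fₜ(y)` on `D` (compare `xₜ` with points of the segment towards `y`
and let them tend to `xₜ`). Since `Fₜ₊₁ = Fₜ + ⟪ℓₜ - mₜ + mₜ₊₁, ·⟫`, applying this at `y = xₜ₊₁`
telescopes the optimal values, and what is left of the regret are the terms
`⟪ℓₜ - mₜ, xₜ - xₜ₊₁⟫ - N(xₜ₊₁ - xₜ)²/(2η)`, each at most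
`η Nd(ℓₜ - mₜ)² - N(xₜ₊₁ - xₜ)²/(4η)` by `|⟪a, u⟫| ≤ Nd(a) N(u)` and AM–GM.
That dual-norm inequality needs the `N`-unit ball to be bounded: a norm on a finite-dimensional
space is convex, hence continuous, hence bounded below on the Euclidean unit sphere.
-/

open scoped InnerProductSpace
open Set Filter Topology

section DualNorm

variable {E : Type*} [NormedAddCommGroup E] [InnerProductSpace ℝ E]

noncomputable def dualNorm (N : E → ℝ) (a : E) : ℝ := sSup {r : ℝ | ∃ x, N x ≤ 1 ∧ r = ⟪a, x⟫_ℝ}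

variable [FiniteDimensional ℝ E]

lemma Seminorm.exists_pos_mul_norm_le (p : Seminorm ℝ E) (hp : ∀ x, x ≠ 0 → 0 < p x) :
    ∃ c > 0, ∀ v, c * ‖v‖ ≤ p v := by
  rcases subsingleton_or_nontrivial E with hE | hE
  · exact ⟨1, one_pos, fun v => by simp [Subsingleton.elim v 0]⟩
  have hcont : Continuous p := continuousOn_univ.1 (p.convexOn.continuousOn isOpen_univ)
  obtain ⟨x₀, hx₀, hmin⟩ := (isCompact_sphere (0 : E) 1).exists_isMinOn
    (NormedSpace.sphere_nonempty.2 zero_le_one) hcont.continuousOn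
  refine ⟨p x₀, hp x₀ (ne_zero_of_mem_unit_sphere ⟨x₀, hx₀⟩), fun v => ?_⟩
  rcases eq_or_ne v 0 with rfl | hv
  · simp
  have hv' : 0 < ‖v‖ := norm_pos_iff.2 hv
  have hmem : ‖v‖⁻¹ • v ∈ Metric.sphere (0 : E) 1 := by
    simpa using norm_smul_inv_norm (𝕜 := ℝ) hv
  have h : p x₀ ≤ p (‖v‖⁻¹ • v) := hmin hmem
  rw [map_smul_eq_mul, Real.norm_eq_abs, abs_inv, abs_norm] at h
  calc p x₀ * ‖v‖ ≤ ‖v‖⁻¹ * p v * ‖v‖ := by gcongr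
    _ = p v := by field_simp

lemma abs_inner_le_dualNorm_mul (p : Seminorm ℝ E) (hp : ∀ x, x ≠ 0 → 0 < p x) (a u : E) :
    |⟪a, u⟫_ℝ| ≤ dualNorm p a * p u := by
  obtain ⟨c, hc, hpc⟩ := p.exists_pos_mul_norm_le hp
  have hbdd : BddAbove {r : ℝ | ∃ x, p x ≤ 1 ∧ r = ⟪a, x⟫_ℝ} := by
    refine ⟨‖a‖ / c, ?_⟩
    rintro _ ⟨x, hx, rfl⟩
    calc ⟪a, x⟫_ℝ ≤ ‖a‖ * ‖x‖ := real_inner_le_norm a x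
      _ ≤ ‖a‖ * (1 / c) := by gcongr; rw [le_div_iff₀ hc]; linarith [hpc x]
      _ = ‖a‖ / c := by ring
  have key : ∀ v, ⟪a, v⟫_ℝ ≤ dualNorm p a * p v := by
    intro v
    rcases eq_or_ne v 0 with rfl | hv
    · simp
    have hpv := hp v hv
    have h : ⟪a, (p v)⁻¹ • v⟫_ℝ ≤ dualNorm p a :=
      le_csSup hbdd ⟨(p v)⁻¹ • v, by simp [map_smul_eq_mul, abs_of_pos hpv, hpv.ne'], rfl⟩
    rw [real_inner_smul_right, inv_mul_le_iff₀ hpv] at h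
    linarith
  refine abs_le.2 ⟨?_, key u⟩
  have hneg := key (-u)
  rw [inner_neg_right, map_neg_eq_map] at hneg
  linarith

end DualNorm

lemma IsMinOn.add_le_of_forall_segment {E : Type*} [AddCommGroup E] [Module ℝ E] {D : Set E}
    {f : E → ℝ} (hD : Convex ℝ D) {z y : E} (hz : z ∈ D) (hy : y ∈ D) (hmin : IsMinOn f D z)
    {K : ℝ} (hf : ∀ s ∈ Ioo (0 : ℝ) 1,
      f (z + s • (y - z)) + s * (1 - s) * K ≤ (1 - s) * f z + s * f y) :
    f z + K ≤ f y := by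
  have hshrink : ∀ s ∈ Ioo (0 : ℝ) 1, f z + (1 - s) * K ≤ f y := by
    intro s hs
    have hzw : f z ≤ f (z + s • (y - z)) := hmin (hD.add_smul_sub_mem hz hy ⟨hs.1.le, hs.2.le⟩)
    have hscaled : s * (f z + (1 - s) * K) ≤ s * f y := by linarith [hf s hs]
    exact le_of_mul_le_mul_left hscaled hs.1
  have hlim : Tendsto (fun s : ℝ => f z + (1 - s) * K) (𝓝[>] 0) (𝓝 (f z + K)) := by
    have hcont : Continuous fun s : ℝ => f z + (1 - s) * K := by fun_prop
    simpa using (hcont.tendsto 0).mono_left nhdsWithin_le_nhds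
  exact le_of_tendsto hlim (mem_of_superset (Ioo_mem_nhdsGT one_pos) hshrink)

section StrongConvexity

variable {E : Type*} [NormedAddCommGroup E] [InnerProductSpace ℝ E] {D : Set E}
  {φ : E → ℝ} {g : E → E}

lemma strongConvex_segment_le (hD : Convex ℝ D) (p : Seminorm ℝ E)
    (hstrong : ∀ x ∈ D, ∀ y ∈ D, φ x + ⟪g x, y - x⟫_ℝ + 1 / 2 * p (y - x) ^ 2 ≤ φ y)
    {x y : E} (hx : x ∈ D) (hy : y ∈ D) {s : ℝ} (hs₀ : 0 ≤ s) (hs₁ : s ≤ 1) :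
    φ (x + s • (y - x)) + s * (1 - s) / 2 * p (y - x) ^ 2 ≤ (1 - s) * φ x + s * φ y := by
  set w := x + s • (y - x)
  have hw : w ∈ D := hD.add_smul_sub_mem hx hy ⟨hs₀, hs₁⟩
  have hxw : x - w = (-s) • (y - x) := by simp only [w]; module
  have hyw : y - w = (1 - s) • (y - x) := by simp only [w]; module
  have h₁ := hstrong w hw x hx
  have h₂ := hstrong w hw y hy
  rw [hxw, real_inner_smul_right, map_smul_eq_mul, Real.norm_eq_abs, abs_neg, abs_of_nonneg hs₀]
    at h₁
  rw [hyw, real_inner_smul_right, map_smul_eq_mul, Real.norm_eq_abs,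
    abs_of_nonneg (sub_nonneg.2 hs₁)] at h₂
  linarith [mul_le_mul_of_nonneg_left h₁ (sub_nonneg.2 hs₁), mul_le_mul_of_nonneg_left h₂ hs₀]

lemma IsMinOn.add_sq_le_of_strongConvex (hD : Convex ℝ D) (p : Seminorm ℝ E)
    (hstrong : ∀ x ∈ D, ∀ y ∈ D, φ x + ⟪g x, y - x⟫_ℝ + 1 / 2 * p (y - x) ^ 2 ≤ φ y)
    {η : ℝ} (hη : 0 < η) {c z y : E} (hz : z ∈ D) (hy : y ∈ D)
    (hmin : IsMinOn (fun y => ⟪c, y⟫_ℝ + 1 / η * φ y) D z) :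
    ⟪c, z⟫_ℝ + 1 / η * φ z + 1 / (2 * η) * p (y - z) ^ 2 ≤ ⟪c, y⟫_ℝ + 1 / η * φ y := by
  refine hmin.add_le_of_forall_segment hD hz hy fun s hs => ?_
  have h := mul_le_mul_of_nonneg_left
    (strongConvex_segment_le hD p hstrong hz hy hs.1.le hs.2.le) (one_div_pos.2 hη).le
  simp only [inner_add_right, real_inner_smul_right, inner_sub_right]
  field_simp at h ⊢
  linarith

end StrongConvexity

section FTRL

variable {E : Type*} [NormedAddCommGroup E] [InnerProductSpace ℝ E] {N Nd : E → ℝ} {η : ℝ}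

lemma inner_sub_le_of_abs_inner_le (hη : 0 < η) (hdual : ∀ a u, |⟪a, u⟫_ℝ| ≤ Nd a * N u)
    (a u v : E) :
    ⟪a, u - v⟫_ℝ - 1 / (2 * η) * N (v - u) ^ 2 ≤ η * Nd a ^ 2 - 1 / (4 * η) * N (v - u) ^ 2 := by
  have hle : ⟪a, u - v⟫_ℝ ≤ Nd a * N (v - u) := by
    rw [← neg_sub, inner_neg_right]
    exact (neg_le_abs _).trans (hdual a (v - u))
  -- AM–GM: `A * B ≤ η * A ^ 2 + B ^ 2 / (4 * η)`
  have hsq : 0 ≤ (2 * η * Nd a - N (v - u)) ^ 2 / (4 * η) := by positivity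
  have hexp : (2 * η * Nd a - N (v - u)) ^ 2 / (4 * η) =
      η * Nd a ^ 2 - Nd a * N (v - u) + 1 / (4 * η) * N (v - u) ^ 2 := by
    field_simp; ring
  have h2 : 1 / (2 * η) = 2 * (1 / (4 * η)) := by field_simp; norm_num
  rw [h2]
  linarith

variable {D : Set E} {φ : E → ℝ} {ℓ m L x : ℕ → E}

lemma ftrl_potential_le (hη : 0 < η) (hdual : ∀ a u, |⟪a, u⟫_ℝ| ≤ Nd a * N u)
    (hφ0 : ∀ y ∈ D, 0 ≤ φ y) (hL0 : L 0 = 0) (hL : ∀ t, L (t + 1) = L t + ℓ (t + 1))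
    (hgrowth : ∀ t, x (t + 1) ∈ D ∧ ∀ y ∈ D,
      ⟪L t + m (t + 1), x (t + 1)⟫_ℝ + 1 / η * φ (x (t + 1)) + 1 / (2 * η) * N (y - x (t + 1)) ^ 2
        ≤ ⟪L t + m (t + 1), y⟫_ℝ + 1 / η * φ y)
    (S : ℕ) {y : E} (hy : y ∈ D) :
    ∑ t ∈ Finset.Icc 1 S, ⟪ℓ t, x t⟫_ℝ + ⟪m (S + 1), x (S + 1)⟫_ℝ
        + 1 / (2 * η) * N (y - x (S + 1)) ^ 2 ≤
      ⟪L S + m (S + 1), y⟫_ℝ + 1 / η * φ y + η * ∑ t ∈ Finset.Icc 1 S, Nd (ℓ t - m t) ^ 2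
        - 1 / (4 * η) * ∑ t ∈ Finset.Icc 1 S, N (x (t + 1) - x t) ^ 2 := by
  induction S generalizing y with
  | zero =>
    have h := (hgrowth 0).2 y hy
    have hφx := mul_nonneg (one_div_pos.2 hη).le (hφ0 _ (hgrowth 0).1)
    rw [Finset.Icc_eq_empty (by norm_num)]
    simp only [hL0, zero_add, Finset.sum_empty, mul_zero, sub_zero] at h hφx ⊢
    linarith
  | succ S ih =>
    have hprev := ih (hgrowth (S + 1)).1
    have hnext := (hgrowth (S + 1)).2 y hy
    have hround :=
      inner_sub_le_of_abs_inner_le hη hdual (ℓ (S + 1) - m (S + 1)) (x (S + 1)) (x (S + 2))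
    rw [Finset.sum_Icc_succ_top (by omega), Finset.sum_Icc_succ_top (by omega),
      Finset.sum_Icc_succ_top (by omega)]
    rw [hL] at hnext ⊢
    simp only [inner_add_left, inner_sub_left, inner_sub_right] at hprev hnext hround ⊢
    linarith

lemma ftrl_regret_le (hη : 0 < η) (hdual : ∀ a u, |⟪a, u⟫_ℝ| ≤ Nd a * N u)
    (hφ0 : ∀ y ∈ D, 0 ≤ φ y) (hL0 : L 0 = 0) (hL : ∀ t, L (t + 1) = L t + ℓ (t + 1))
    (hgrowth : ∀ t, x (t + 1) ∈ D ∧ ∀ y ∈ D,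
      ⟪L t + m (t + 1), x (t + 1)⟫_ℝ + 1 / η * φ (x (t + 1)) + 1 / (2 * η) * N (y - x (t + 1)) ^ 2
        ≤ ⟪L t + m (t + 1), y⟫_ℝ + 1 / η * φ y) :
    ∀ xhat ∈ D, ∀ T : ℕ,
      ∑ t ∈ Finset.Icc 1 T, ⟪ℓ t, x t - xhat⟫_ℝ ≤
        φ xhat / η + η * ∑ t ∈ Finset.Icc 1 T, (Nd (ℓ t - m t)) ^ 2 -
          1 / (4 * η) * ∑ t ∈ Finset.Icc 1 (T - 1), (N (x (t + 1) - x t)) ^ 2 := by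
  intro xhat hxhat T
  rcases T with _ | S
  · simpa using div_nonneg (hφ0 xhat hxhat) hη.le
  have hL_sum : L S = ∑ t ∈ Finset.Icc 1 S, ℓ t := by
    induction S with
    | zero => simp [hL0]
    | succ S ih => rw [hL, ih, Finset.sum_Icc_succ_top (by omega)]
  have hpot := ftrl_potential_le hη hdual hφ0 hL0 hL hgrowth S hxhat
  have hlast := inner_sub_le_of_abs_inner_le hη hdual (ℓ (S + 1) - m (S + 1)) (x (S + 1)) xhat
  rw [Nat.add_sub_cancel, Finset.sum_Icc_succ_top (by omega), Finset.sum_Icc_succ_top (by omega)]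
  simp only [hL_sum, inner_add_left, sum_inner, inner_sub_left, inner_sub_right,
    Finset.sum_sub_distrib] at hpot hlast ⊢
  have hsq : 0 ≤ 1 / (4 * η) * N (xhat - x (S + 1)) ^ 2 := by positivity
  have hdiv : φ xhat / η = 1 / η * φ xhat := by ring
  linarith

end FTRL

theorem stmt_13_general {n : ℕ} (D : Set (EuclideanSpace ℝ (Fin n)))
    (hDconv : Convex ℝ D)
    (N Nd : EuclideanSpace ℝ (Fin n) → ℝ)
    (hNadd : ∀ x y, N (x + y) ≤ N x + N y)
    (hNsmul : ∀ (c : ℝ) (x), N (c • x) = |c| * N x)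
    (hNpos : ∀ x, x ≠ 0 → 0 < N x)
    (hNd : ∀ a, Nd a = sSup {r : ℝ | ∃ x, N x ≤ 1 ∧ r = ⟪a, x⟫_ℝ})
    (φ : EuclideanSpace ℝ (Fin n) → ℝ) (hφ0 : ∀ x ∈ D, 0 ≤ φ x)
    (gφ : EuclideanSpace ℝ (Fin n) → EuclideanSpace ℝ (Fin n))
    (hstrong : ∀ x ∈ D, ∀ y ∈ D, φ x + ⟪gφ x, y - x⟫_ℝ + 1 / 2 * (N (y - x)) ^ 2 ≤ φ y)
    (η : ℝ) (hη : 0 < η)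
    (ℓ m L x : ℕ → EuclideanSpace ℝ (Fin n))
    (hL0 : L 0 = 0)
    (hL : ∀ t : ℕ, 1 ≤ t → L t = L (t - 1) + ℓ t)
    (hx : ∀ t : ℕ, 1 ≤ t → x t ∈ D ∧
      IsMinOn (fun y => ⟪L (t - 1) + m t, y⟫_ℝ + 1 / η * φ y) D (x t)) :
    ∀ xhat ∈ D, ∀ T : ℕ,
      ∑ t ∈ Finset.Icc 1 T, ⟪ℓ t, x t - xhat⟫_ℝ ≤
        φ xhat / η + η * ∑ t ∈ Finset.Icc 1 T, (Nd (ℓ t - m t)) ^ 2 -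
          1 / (4 * η) * ∑ t ∈ Finset.Icc 1 (T - 1), (N (x (t + 1) - x t)) ^ 2 := by
  let p : Seminorm ℝ (EuclideanSpace ℝ (Fin n)) :=
    Seminorm.of N hNadd fun c v => by rw [hNsmul, Real.norm_eq_abs]
  have hdual : ∀ a u, |⟪a, u⟫_ℝ| ≤ Nd a * N u := fun a u => by
    rw [hNd]
    exact abs_inner_le_dualNorm_mul p hNpos a u
  refine ftrl_regret_le hη hdual hφ0 hL0 (fun t => by simpa using hL (t + 1) t.succ_pos)
    fun t => ?_
  obtain ⟨hxD, hxmin⟩ := hx (t + 1) t.succ_pos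
  rw [Nat.add_sub_cancel] at hxmin
  exact ⟨hxD, fun y hy => hxmin.add_sq_le_of_strongConvex hDconv p hstrong hη hxD hy⟩

/-- Predictive FTRL regret bound. With `φ : D → ℝ≥0` differentiable and
1-strongly convex w.r.t. a norm `N` (dual norm `Nd`) on a closed convex `D ⊆ ℝⁿ`, `η > 0`,
`L⁰ = 0`, `Lᵗ = Lᵗ⁻¹ + ℓᵗ`, and `xᵗ = argmin_{x∈D} ⟨Lᵗ⁻¹ + mᵗ, x⟩ + (1/η)φ(x)`, for every
`x̂ ∈ D` and `T`:
`Σₜ₌₁ᵀ ⟨ℓᵗ, xᵗ − x̂⟩ ≤ φ(x̂)/η + η Σₜ₌₁ᵀ ‖ℓᵗ−mᵗ‖*² − (1/(4η)) Σₜ₌₁^{T−1} ‖xᵗ⁺¹−xᵗ‖²`. -/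
theorem stmt_13 {n : ℕ} (D : Set (EuclideanSpace ℝ (Fin n)))
    (hDc : IsClosed D) (hDconv : Convex ℝ D)
    (N Nd : EuclideanSpace ℝ (Fin n) → ℝ)
    (hNadd : ∀ x y, N (x + y) ≤ N x + N y)
    (hNsmul : ∀ (c : ℝ) (x), N (c • x) = |c| * N x)
    (hNpos : ∀ x, x ≠ 0 → 0 < N x)
    (hNd : ∀ a, Nd a = sSup {r : ℝ | ∃ x, N x ≤ 1 ∧ r = ⟪a, x⟫_ℝ})
    (φ : EuclideanSpace ℝ (Fin n) → ℝ) (hφ0 : ∀ x ∈ D, 0 ≤ φ x)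
    (gφ : EuclideanSpace ℝ (Fin n) → EuclideanSpace ℝ (Fin n))
    (hdiff : ∀ x ∈ D, HasGradientAt φ (gφ x) x)
    (hstrong : ∀ x ∈ D, ∀ y ∈ D, φ x + ⟪gφ x, y - x⟫_ℝ + 1 / 2 * (N (y - x)) ^ 2 ≤ φ y)
    (η : ℝ) (hη : 0 < η)
    (ℓ m L x : ℕ → EuclideanSpace ℝ (Fin n))
    (hL0 : L 0 = 0)
    (hL : ∀ t : ℕ, 1 ≤ t → L t = L (t - 1) + ℓ t)
    (hx : ∀ t : ℕ, 1 ≤ t → x t ∈ D ∧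
      IsMinOn (fun y => ⟪L (t - 1) + m t, y⟫_ℝ + 1 / η * φ y) D (x t)) :
    ∀ xhat ∈ D, ∀ T : ℕ,
      ∑ t ∈ Finset.Icc 1 T, ⟪ℓ t, x t - xhat⟫_ℝ ≤
        φ xhat / η + η * ∑ t ∈ Finset.Icc 1 T, (Nd (ℓ t - m t)) ^ 2 -
          1 / (4 * η) * ∑ t ∈ Finset.Icc 1 (T - 1), (N (x (t + 1) - x t)) ^ 2 :=
  stmt_13_general D hDconv N Nd hNadd hNsmul hNpos hNd φ hφ0 gφ hstrong η hη ℓ m L x hL0 hL hx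
end
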